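/- arXiv:2504.17244 — 2 statements merged into one kernel-verified Lean document; each statement's English description precedes it below -/
import Mathlib

section
/- Characterization of the service rate region when n = k + i − 1: a nonnegative vector λ = (λ_1,…,λ_k) belongs to S_i(k+i−1, k) if and only if Σ_{j=1}^k λ_j ≤ i and, for every subset A ⊆ [i], k·(Σ_{j∈A} λ_j + Σ_{j=i+1}^k λ_j) + Σ_{j∈[i]\A} λ_j ≤ (k + i − 1) + |A|·(k−1). -/
open Matrix

/-- `R ⊆ [n]` is a recovery set for object `j` under generator matrix `G`:
the standard basis vector `e_j` lies in the span of the columns of `G` indexed by `R`,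
and minimally so. -/
def IsRecoverySet {F : Type*} [Field F] {k n : ℕ} (G : Matrix (Fin k) (Fin n) F)
    (j : Fin k) (R : Finset (Fin n)) : Prop :=
  (Pi.single j 1 : Fin k → F) ∈ Submodule.span F (Gᵀ '' (R : Set (Fin n))) ∧
    ∀ S : Finset (Fin n), S ⊂ R →
      (Pi.single j 1 : Fin k → F) ∉ Submodule.span F (Gᵀ '' (S : Set (Fin n)))

/-- A valid allocation of request rates `lam` to recovery sets: nonnegative weights
`w j R` supported on recovery sets, summing to `lam j` for each object `j`, and
loading each server `l` by at most its unit capacity. -/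
def IsValidAllocation {F : Type*} [Field F] {k n : ℕ} (G : Matrix (Fin k) (Fin n) F)
    (lam : Fin k → ℝ) (w : Fin k → Finset (Fin n) → ℝ) : Prop :=
  (∀ j R, 0 ≤ w j R) ∧
  (∀ j R, ¬ IsRecoverySet G j R → w j R = 0) ∧
  (∀ j, ∑ R : Finset (Fin n), w j R = lam j) ∧
  (∀ l : Fin n, ∑ j : Fin k, ∑ R ∈ Finset.univ.filter (fun R : Finset (Fin n) => l ∈ R),
      w j R ≤ 1)

/-- The service rate region of `G`. -/
def ServiceRegion {F : Type*} [Field F] {k n : ℕ} (G : Matrix (Fin k) (Fin n) F) :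
    Set (Fin k → ℝ) :=
  {lam | (∀ j, 0 ≤ lam j) ∧ ∃ w, IsValidAllocation G lam w}

/-- `Gmat M i` = the `k × n` matrix formed by the `i` leftmost (systematic) columns of `M`
followed by the `n - i` rightmost (parity) columns of `M`. -/
def Gmat {F : Type*} [Field F] {k n : ℕ} (M : Matrix (Fin k) (Fin (k + n)) F) (i : ℕ) :
    Matrix (Fin k) (Fin n) F :=
  Matrix.of fun r l =>
    if (l : ℕ) < i then M r ⟨(l : ℕ), by have := l.isLt; omega⟩
    else M r ⟨k + (l : ℕ), by have := l.isLt; omega⟩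

/-!
By the MDS property, `e_j` lies in the span of fewer than `k` columns of `M` only if it is one of
them, and in the span of any `k` columns. So the recovery sets of `G_i` for object `j` are the
singleton of its systematic server (when `j < i`) and the `k`-sets of servers avoiding that server.

Necessity is LP weak duality: server weights `α ≥ 0` and object weights `c` with
`c j ≤ ∑_{l ∈ R} α l` on every recovery set give `∑ c j λ j ≤ ∑ α l`. Since there are only `k - 1`
parity servers, every `k`-set meets a systematic server, and the two families of inequalities come
from `α = 1` on systematic servers, `c = 1`, and from `α = k` on the systematic servers of `A`,
`c = 1` on the systematic objects outside `A` (`α = 1`, `c = k` elsewhere).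

Sufficiency: each systematic object is served up to rate `1` by its own server; the residual
demand `D` is spread over `k`-sets drawn from one distribution whose marginals `p` satisfy
`D p_l ≤ c_l`, the spare capacity of server `l`. The hypersimplex `{p ∈ [0,1]^n | ∑ p = k}` is
the convex hull of the indicators of `k`-sets (Krein–Milman: a point with a fractional coordinate
has a second one and is not extreme), so such a distribution exists as soon as
`k D ≤ ∑_l min(D, c_l)`, and the inequality for `A = {j < i | λ_j > 1}` is exactly that.
-/

open Finset Submodule

section Hypersimplex

variable {ι : Type*}

def indicatorVec [DecidableEq ι] (S : Finset ι) : ι → ℝ := fun a => if a ∈ S then 1 else 0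

theorem indicatorVec_injective [DecidableEq ι] : Function.Injective (indicatorVec (ι := ι)) := by
  intro S T h
  ext a
  have := congrFun h a
  by_cases hS : a ∈ S <;> by_cases hT : a ∈ T <;> simp_all [indicatorVec]

variable [Fintype ι]

variable (ι) in
def hypersimplex (k : ℕ) : Set (ι → ℝ) :=
  Set.Icc 0 1 ∩ {p | ∑ a, p a = k}

theorem convex_hypersimplex (k : ℕ) : Convex ℝ (hypersimplex ι k) :=
  (convex_Icc 0 1).inter <| convex_hyperplane
    ⟨fun _ _ => sum_add_distrib, fun c _ => (mul_sum _ _ c).symm⟩ _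

theorem isCompact_hypersimplex (k : ℕ) : IsCompact (hypersimplex ι k) :=
  isCompact_Icc.inter_right <|
    isClosed_eq (continuous_finsetSum _ fun a _ => continuous_apply a) continuous_const

variable [DecidableEq ι]

theorem sum_indicatorVec (S : Finset ι) : ∑ a, indicatorVec S a = #S := by
  simp [indicatorVec]

theorem exists_ne_fractional_of_mem_hypersimplex {k : ℕ} {p : ι → ℝ}
    (hp : p ∈ hypersimplex ι k) {a : ι} (ha0 : 0 < p a) (ha1 : p a < 1) :
    ∃ b ≠ a, 0 < p b ∧ p b < 1 := by
  by_contra! h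
  have hint : ∀ b ∈ univ.erase a, p b = if p b = 1 then 1 else 0 := by
    intro b hb
    rcases (hp.1.1 b).eq_or_lt with h0 | h0
    · simp [← h0]
    · simp [le_antisymm (hp.1.2 b) (h b (ne_of_mem_erase hb) h0)]
  have hsum : (k : ℝ) = p a + #{b ∈ univ.erase a | p b = 1} := by
    rw [← hp.2, ← add_sum_erase _ _ (mem_univ a), sum_congr rfl hint, sum_ite, sum_const_zero,
      add_zero, sum_const, nsmul_one]
  obtain ⟨m, hm⟩ : ∃ m : ℤ, p a = m :=
    ⟨k - #{b ∈ univ.erase a | p b = 1}, by push_cast; linarith⟩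
  rw [hm] at ha0 ha1
  have : (0 : ℤ) < m := by exact_mod_cast ha0
  have : m < 1 := by exact_mod_cast ha1
  omega

theorem add_single_sub_single_mem_hypersimplex {k : ℕ} {p : ι → ℝ} (hp : p ∈ hypersimplex ι k)
    {a b : ι} (hab : a ≠ b) {t : ℝ} (ha : p a + t ∈ Set.Icc 0 1) (hb : p b - t ∈ Set.Icc 0 1) :
    p + (Pi.single a t - Pi.single b t) ∈ hypersimplex ι k := by
  obtain ⟨⟨hp0, hp1⟩, hpk⟩ := hp
  have hcoord : ∀ c, (p + (Pi.single a t - Pi.single b t) : ι → ℝ) c ∈ Set.Icc 0 1 := by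
    intro c
    rcases eq_or_ne c a with rfl | hca
    · simpa [Pi.single_eq_of_ne hab] using ha
    rcases eq_or_ne c b with rfl | hcb
    · simpa [Pi.single_eq_of_ne hca, sub_eq_add_neg] using hb
    · simpa [Pi.single_eq_of_ne hca, Pi.single_eq_of_ne hcb] using ⟨hp0 c, hp1 c⟩
  exact ⟨⟨fun c => (hcoord c).1, fun c => (hcoord c).2⟩,
    by simp [sum_add_distrib, sum_sub_distrib, hpk.out]⟩

theorem eq_zero_or_eq_one_of_mem_extremePoints {k : ℕ} {p : ι → ℝ}
    (hp : p ∈ (hypersimplex ι k).extremePoints ℝ) (a : ι) : p a = 0 ∨ p a = 1 := by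
  by_contra! h
  have ha0 : 0 < p a := lt_of_le_of_ne (hp.1.1.1 a) h.1.symm
  have ha1 : p a < 1 := lt_of_le_of_ne (hp.1.1.2 a) h.2
  obtain ⟨b, hba, hb0, hb1⟩ := exists_ne_fractional_of_mem_hypersimplex hp.1 ha0 ha1
  set ε := min (min (p a) (1 - p a)) (min (p b) (1 - p b))
  have hε : 0 < ε := lt_min (lt_min ha0 (by linarith)) (lt_min hb0 (by linarith))
  have hεa : ε ≤ p a ∧ ε ≤ 1 - p a := ⟨by simp [ε], by simp [ε]⟩
  have hεb : ε ≤ p b ∧ ε ≤ 1 - p b := ⟨by simp [ε], by simp [ε]⟩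
  have hplus := add_single_sub_single_mem_hypersimplex hp.1 hba.symm (t := ε)
    ⟨by linarith, by linarith⟩ ⟨by linarith, by linarith⟩
  have hminus := add_single_sub_single_mem_hypersimplex hp.1 hba (t := ε)
    ⟨by linarith, by linarith⟩ ⟨by linarith, by linarith⟩
  have hmid : p ∈ openSegment ℝ (p + (Pi.single b ε - Pi.single a ε))
      (p + (Pi.single a ε - Pi.single b ε)) :=
    ⟨1 / 2, 1 / 2, by norm_num, by norm_num, by norm_num, by module⟩
  have := congrFun ((mem_extremePoints.1 hp).2 _ hminus _ hplus hmid).2 a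
  simp [Pi.single_eq_of_ne hba.symm] at this
  linarith

theorem mem_image_indicatorVec_of_mem_extremePoints {k : ℕ} {p : ι → ℝ}
    (hp : p ∈ (hypersimplex ι k).extremePoints ℝ) :
    p ∈ (powersetCard k (univ : Finset ι)).image indicatorVec := by
  have hp_eq : p = indicatorVec ({a | p a = 1} : Finset ι) := by
    ext a
    rcases eq_zero_or_eq_one_of_mem_extremePoints hp a with h | h <;> simp [indicatorVec, h]
  refine mem_image.2 ⟨({a | p a = 1} : Finset ι), mem_powersetCard.2 ⟨subset_univ _, ?_⟩,
    hp_eq.symm⟩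
  have := hp.1.2.out
  rw [hp_eq, sum_indicatorVec] at this
  exact_mod_cast this

theorem hypersimplex_subset_convexHull (k : ℕ) :
    hypersimplex ι k ⊆ convexHull ℝ
      (((powersetCard k univ).image indicatorVec : Finset (ι → ℝ)) : Set (ι → ℝ)) := by
  rw [← closure_convexHull_extremePoints (isCompact_hypersimplex k) (convex_hypersimplex k)]
  exact closure_minimal (convexHull_mono fun p => mem_image_indicatorVec_of_mem_extremePoints)
    (Set.Finite.isClosed_convexHull ℝ (finite_toSet _))

theorem exists_distrib_of_mem_hypersimplex {k : ℕ} {p : ι → ℝ} (hp : p ∈ hypersimplex ι k) :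
    ∃ W : Finset ι → ℝ, (∀ S, 0 ≤ W S) ∧ (∀ S, W S ≠ 0 → #S = k) ∧ ∑ S, W S = 1 ∧
      ∀ a, ∑ S with a ∈ S, W S = p a := by
  obtain ⟨w, hw0, hw1, hwp⟩ := Finset.mem_convexHull'.1 (hypersimplex_subset_convexHull k hp)
  rw [sum_image indicatorVec_injective.injOn] at hw1 hwp
  have hpc : ({S | #S = k} : Finset (Finset ι)) = powersetCard k univ := by
    ext
    simp
  refine ⟨fun S => if #S = k then w (indicatorVec S) else 0, fun S => ?_, fun S hS => ?_,
    ?_, fun a => ?_⟩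
  · dsimp only
    split_ifs with h
    · exact hw0 _ (mem_image_of_mem _ (mem_powersetCard_univ.2 h))
    · exact le_rfl
  · by_contra h
    exact hS (if_neg h)
  · rw [← sum_filter, hpc, hw1]
  · rw [← hwp, Finset.sum_apply, ← hpc, sum_filter, sum_filter]
    exact sum_congr rfl fun S _ => by split_ifs <;> simp [indicatorVec, *]

end Hypersimplex

section WaterFilling

variable {ι : Type*}

theorem min_le_sum_min (s : Finset ι) {c : ι → ℝ} (hc : ∀ a ∈ s, 0 ≤ c a) {D : ℝ}
    (hD : 0 ≤ D) : min D (∑ a ∈ s, c a) ≤ ∑ a ∈ s, min D (c a) := by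
  by_cases h : ∃ a ∈ s, D ≤ c a
  · obtain ⟨a, ha, hDa⟩ := h
    calc min D (∑ a ∈ s, c a) ≤ min D (c a) := by rw [min_eq_left hDa]; exact min_le_left _ _
      _ ≤ ∑ a ∈ s, min D (c a) := single_le_sum (fun b hb => le_min hD (hc b hb)) ha
  · push Not at h
    calc min D (∑ a ∈ s, c a) ≤ ∑ a ∈ s, c a := min_le_right _ _
      _ = ∑ a ∈ s, min D (c a) := sum_congr rfl fun a ha => (min_eq_right (h a ha).le).symm

variable [Fintype ι] [DecidableEq ι]

theorem mul_le_sum_min (s : Finset ι) {c : ι → ℝ} {D : ℝ} {k : ℕ} (hc0 : ∀ a, 0 ≤ c a)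
    (hc1 : ∀ a, c a ≤ 1) (hcs : ∀ a ∉ s, c a = 1) (hk : k ≤ #sᶜ + 1) (hD0 : 0 ≤ D)
    (hDs : D ≤ ∑ a ∈ s, c a) (hDk : k * D ≤ ∑ a, c a) :
    k * D ≤ ∑ a, min D (c a) := by
  rcases le_total 1 D with hD1 | hD1
  · rwa [sum_congr rfl fun a _ => min_eq_right ((hc1 a).trans hD1)]
  · have hcompl : ∑ a ∈ sᶜ, min D (c a) = #sᶜ * D := by
      rw [sum_congr rfl fun a ha => by rw [hcs a (mem_compl.1 ha), min_eq_left hD1],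
        sum_const, nsmul_eq_mul]
    have hs := min_le_sum_min s (fun a _ => hc0 a) hD0
    rw [min_eq_left hDs] at hs
    have hk' : (k : ℝ) ≤ #sᶜ + 1 := by exact_mod_cast hk
    rw [← sum_add_sum_compl s, hcompl]
    nlinarith

theorem exists_mem_hypersimplex_mul_le {k : ℕ} (hk : k ≤ Fintype.card ι) {D : ℝ} (hD : 0 ≤ D)
    {c : ι → ℝ} (hc : ∀ a, 0 ≤ c a) (h : k * D ≤ ∑ a, min D (c a)) :
    ∃ p ∈ hypersimplex ι k, ∀ a, D * p a ≤ c a := by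
  rcases (mul_nonneg (Nat.cast_nonneg k) hD).eq_or_lt with hkD | hkD
  · obtain ⟨S, -, hS⟩ := exists_subset_card_eq (s := (univ : Finset ι)) hk
    refine ⟨indicatorVec S, ⟨⟨fun a => ?_, fun a => ?_⟩, by simp [sum_indicatorVec, hS]⟩,
      fun a => ?_⟩
    · unfold indicatorVec; split_ifs <;> norm_num
    · unfold indicatorVec; split_ifs <;> norm_num
    · rcases mul_eq_zero.1 hkD.symm with hk0 | hD0
      · rw [Nat.cast_eq_zero] at hk0
        simp [indicatorVec, card_eq_zero.1 (hS.trans hk0), hc a]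
      · simp [hD0, hc a]
  · set X := ∑ a, min D (c a)
    have hX : 0 < X := hkD.trans_le h
    refine ⟨fun a => k * min D (c a) / X, ⟨⟨fun a => ?_, fun a => ?_⟩, ?_⟩, fun a => ?_⟩
    · exact div_nonneg (mul_nonneg (Nat.cast_nonneg k) (le_min hD (hc a))) hX.le
    · exact (div_le_one hX).2 <|
        (mul_le_mul_of_nonneg_left (min_le_left _ _) (Nat.cast_nonneg k)).trans h
    · simp [← sum_div, ← mul_sum, X, hX.ne']
    · calc D * (k * min D (c a) / X) = (k * D / X) * min D (c a) := by ring
        _ ≤ 1 * min D (c a) := by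
          gcongr
          · exact le_min hD (hc a)
          · exact (div_le_one hX).2 h
        _ ≤ c a := by rw [one_mul]; exact min_le_right _ _

theorem exists_distrib_card_eq_mul_marginal_le (s : Finset ι) {c : ι → ℝ} {D : ℝ} {k : ℕ}
    (hc0 : ∀ a, 0 ≤ c a) (hc1 : ∀ a, c a ≤ 1) (hcs : ∀ a ∉ s, c a = 1) (hk : k ≤ #sᶜ + 1)
    (hkι : k ≤ Fintype.card ι) (hD0 : 0 ≤ D) (hDs : D ≤ ∑ a ∈ s, c a)
    (hDk : k * D ≤ ∑ a, c a) :
    ∃ W : Finset ι → ℝ, (∀ S, 0 ≤ W S) ∧ (∀ S, W S ≠ 0 → #S = k) ∧ ∑ S, W S = 1 ∧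
      ∀ a, D * ∑ S with a ∈ S, W S ≤ c a := by
  obtain ⟨p, hp, hpc⟩ := exists_mem_hypersimplex_mul_le hkι hD0 hc0
    (mul_le_sum_min s hc0 hc1 hcs hk hD0 hDs hDk)
  obtain ⟨W, hW0, hWk, hW1, hWp⟩ := exists_distrib_of_mem_hypersimplex hp
  exact ⟨W, hW0, hWk, hW1, fun a => (hWp a).symm ▸ hpc a⟩

end WaterFilling

section MDS

variable {F : Type*} [Field F] {k : ℕ} {ι : Type*} {N : Matrix (Fin k) ι F}

theorem span_transpose_image_eq_top
    (hMDS : ∀ S : Finset ι, #S = k → LinearIndependent F (fun l : S => Nᵀ (l : ι)))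
    {Q : Finset ι} (hQ : #Q = k) : span F (Nᵀ '' Q) = ⊤ := by
  rw [show Nᵀ '' (Q : Set ι) = Set.range (fun l : Q => Nᵀ (l : ι)) from Set.image_eq_range _ _]
  exact (hMDS Q hQ).span_eq_top_of_card_eq_finrank' (by simp [hQ])

variable [Fintype ι]

theorem linearIndepOn_of_card_le
    (hMDS : ∀ S : Finset ι, #S = k → LinearIndependent F (fun l : S => Nᵀ (l : ι)))
    (hk : k ≤ Fintype.card ι) {Q : Finset ι} (hQ : #Q ≤ k) :
    LinearIndepOn F Nᵀ (Q : Set ι) := by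
  obtain ⟨T, hQT, hT⟩ := exists_superset_card_eq hQ hk
  exact LinearIndepOn.mono (hMDS T hT) (coe_subset.2 hQT)

theorem transpose_apply_notMem_span [DecidableEq ι]
    (hMDS : ∀ S : Finset ι, #S = k → LinearIndependent F (fun l : S => Nᵀ (l : ι)))
    (hk : k ≤ Fintype.card ι) {Q : Finset ι} (hQ : #Q < k) {x : ι} (hx : x ∉ Q) :
    Nᵀ x ∉ span F (Nᵀ '' Q) := by
  have := linearIndepOn_of_card_le hMDS hk (Q := insert x Q)
    (by rw [card_insert_of_notMem hx]; omega)
  rw [coe_insert] at this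
  exact this.notMem_span_of_insert hx

end MDS

section Gmat

variable {F : Type*} [Field F] {k n i : ℕ}

def gmatColumn (k i : ℕ) {n : ℕ} (l : Fin n) : Fin (k + n) :=
  if (l : ℕ) < i then Fin.castLE (by omega) l else Fin.natAdd k l

theorem transpose_gmat_apply (M : Matrix (Fin k) (Fin (k + n)) F) (l : Fin n) :
    (Gmat M i)ᵀ l = Mᵀ (gmatColumn k i l) := by
  ext r
  simp only [Matrix.transpose_apply, Gmat, Matrix.of_apply, gmatColumn]
  split_ifs <;> rfl

theorem gmatColumn_injective : Function.Injective (gmatColumn k i (n := n)) := by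
  intro a b h
  have := congrArg Fin.val h
  simp only [gmatColumn] at this
  split_ifs at this <;> simp at this <;> omega

theorem gmatColumn_eq_castAdd_iff (hkn : k ≤ n) (l : Fin n) (j : Fin k) :
    gmatColumn k i l = Fin.castAdd n j ↔ (j : ℕ) < i ∧ l = Fin.castLE hkn j := by
  simp only [gmatColumn, Fin.ext_iff]
  split_ifs <;> simp <;> omega

theorem span_transpose_gmat_image (M : Matrix (Fin k) (Fin (k + n)) F) (R : Finset (Fin n)) :
    span F ((Gmat M i)ᵀ '' R) = span F (Mᵀ '' (R.image (gmatColumn k i))) := by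
  rw [coe_image]
  congr 1
  ext v
  constructor
  · rintro ⟨l, hl, rfl⟩
    exact ⟨gmatColumn k i l, ⟨l, hl, rfl⟩, (transpose_gmat_apply M l).symm⟩
  · rintro ⟨_, ⟨l, hl, rfl⟩, rfl⟩
    exact ⟨l, hl, transpose_gmat_apply M l⟩

theorem transpose_castAdd_eq_single {M : Matrix (Fin k) (Fin (k + n)) F}
    (hsys : ∀ j : Fin k, ∀ r : Fin k, M r (Fin.castAdd n j) = if r = j then (1 : F) else 0)
    (j : Fin k) : Mᵀ (Fin.castAdd n j) = Pi.single j 1 := by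
  ext r
  rw [Matrix.transpose_apply, hsys, Pi.single_apply]

theorem single_mem_span_gmat_iff {M : Matrix (Fin k) (Fin (k + n)) F}
    (hsys : ∀ j : Fin k, ∀ r : Fin k, M r (Fin.castAdd n j) = if r = j then (1 : F) else 0)
    (hMDS : ∀ S : Finset (Fin (k + n)), #S = k →
      LinearIndependent F (fun l : S => Mᵀ (l : Fin (k + n))))
    (hkn : k ≤ n) {j : Fin k} {R : Finset (Fin n)}
    (hR : ¬((j : ℕ) < i ∧ Fin.castLE hkn j ∈ R)) :
    (Pi.single j 1 : Fin k → F) ∈ span F ((Gmat M i)ᵀ '' R) ↔ k ≤ #R := by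
  have hx : Fin.castAdd n j ∉ R.image (gmatColumn k i) := by
    simp only [mem_image, gmatColumn_eq_castAdd_iff hkn, not_exists, not_and]
    intro l hl hj hl'
    exact hR ⟨hj, hl' ▸ hl⟩
  have hcard : #(R.image (gmatColumn k i)) = #R := card_image_of_injective _ gmatColumn_injective
  rw [span_transpose_gmat_image, ← transpose_castAdd_eq_single hsys]
  constructor
  · intro h
    by_contra! hlt
    exact transpose_apply_notMem_span hMDS (by simp) (hcard ▸ hlt) hx h
  · intro h
    obtain ⟨Q, hQ, hQk⟩ := exists_subset_card_eq (hcard ▸ h)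
    refine span_mono (Set.image_mono (coe_subset.2 hQ)) ?_
    rw [span_transpose_image_eq_top hMDS hQk]
    exact mem_top

theorem isRecoverySet_gmat_iff {M : Matrix (Fin k) (Fin (k + n)) F}
    (hsys : ∀ j : Fin k, ∀ r : Fin k, M r (Fin.castAdd n j) = if r = j then (1 : F) else 0)
    (hMDS : ∀ S : Finset (Fin (k + n)), #S = k →
      LinearIndependent F (fun l : S => Mᵀ (l : Fin (k + n))))
    (hkn : k ≤ n) (j : Fin k) (R : Finset (Fin n)) :
    IsRecoverySet (Gmat M i) j R ↔
      ((j : ℕ) < i ∧ R = {Fin.castLE hkn j}) ∨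
        (#R = k ∧ ((j : ℕ) < i → Fin.castLE hkn j ∉ R)) := by
  have hsys_mem : ∀ S : Finset (Fin n), (j : ℕ) < i → Fin.castLE hkn j ∈ S →
      (Pi.single j 1 : Fin k → F) ∈ span F ((Gmat M i)ᵀ '' S) := fun S hj hS =>
    subset_span ⟨_, hS, by rw [transpose_gmat_apply,
      (gmatColumn_eq_castAdd_iff hkn _ j).2 ⟨hj, rfl⟩, transpose_castAdd_eq_single hsys]⟩
  have hspan : ∀ S : Finset (Fin n), ¬((j : ℕ) < i ∧ Fin.castLE hkn j ∈ S) →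
      ((Pi.single j 1 : Fin k → F) ∈ span F ((Gmat M i)ᵀ '' S) ↔ k ≤ #S) :=
    fun S hS => single_mem_span_gmat_iff hsys hMDS hkn hS
  constructor
  · rintro ⟨hmem, hmin⟩
    by_cases hP : (j : ℕ) < i ∧ Fin.castLE hkn j ∈ R
    · refine Or.inl ⟨hP.1, ?_⟩
      by_contra hne
      exact hmin _ (Finset.ssubset_iff_subset_ne.2 ⟨singleton_subset_iff.2 hP.2, Ne.symm hne⟩)
        (hsys_mem _ hP.1 (mem_singleton_self _))
    · refine Or.inr ⟨le_antisymm ?_ ((hspan R hP).1 hmem), fun hj hR => hP ⟨hj, hR⟩⟩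
      by_contra! hlt
      obtain ⟨S, hSR, hS⟩ := exists_subset_card_eq hlt.le
      exact hmin S (Finset.ssubset_iff_subset_ne.2 ⟨hSR, by rintro rfl; omega⟩)
        ((hspan S fun h => hP ⟨h.1, hSR h.2⟩).2 hS.ge)
  · rintro (⟨hj, rfl⟩ | ⟨hR, hjR⟩)
    · refine ⟨hsys_mem _ hj (mem_singleton_self _), fun S hS => ?_⟩
      obtain rfl := ssubset_singleton_iff.1 hS
      rw [hspan ∅ (by simp), card_empty, Nat.le_zero]
      exact j.pos.ne'
    · have hP : ∀ S ⊆ R, ¬((j : ℕ) < i ∧ Fin.castLE hkn j ∈ S) :=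
        fun S hS h => hjR h.1 (hS h.2)
      refine ⟨(hspan R (hP R subset_rfl)).2 hR.ge, fun S hS => ?_⟩
      rw [hspan S (hP S hS.subset), not_le, ← hR]
      exact card_lt_card hS

end Gmat

section Necessity

variable {F : Type*} [Field F] {k n i : ℕ} {G : Matrix (Fin k) (Fin n) F}

theorem IsValidAllocation.sum_mul_le {lam : Fin k → ℝ} {w : Fin k → Finset (Fin n) → ℝ}
    (hw : IsValidAllocation G lam w) {α : Fin n → ℝ} (hα : ∀ l, 0 ≤ α l) {c : Fin k → ℝ}
    (hc : ∀ j R, IsRecoverySet G j R → c j ≤ ∑ l ∈ R, α l) :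
    ∑ j, c j * lam j ≤ ∑ l, α l := by
  obtain ⟨hw0, hwrec, hwsum, hload⟩ := hw
  calc ∑ j, c j * lam j = ∑ j, ∑ R, c j * w j R := by simp_rw [← hwsum, mul_sum]
    _ ≤ ∑ j, ∑ R, (∑ l ∈ R, α l) * w j R := by
        refine sum_le_sum fun j _ => sum_le_sum fun R _ => ?_
        by_cases hR : IsRecoverySet G j R
        · exact mul_le_mul_of_nonneg_right (hc j R hR) (hw0 j R)
        · simp [hwrec j R hR]
    _ = ∑ l, α l * ∑ j, ∑ R with l ∈ R, w j R := by
        have h : ∀ j R, (∑ l ∈ R, α l) * w j R = ∑ l, if l ∈ R then α l * w j R else 0 :=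
          fun j R => by rw [sum_ite_mem, univ_inter, sum_mul]
        simp_rw [h, mul_sum, sum_filter]
        exact (sum_congr rfl fun j _ => sum_comm).trans sum_comm
    _ ≤ ∑ l, α l := sum_le_sum fun l _ => mul_le_of_le_one_right (hα l) (hload l)

theorem exists_mem_lt_of_sub_lt_card {R : Finset (Fin n)} (h : n - i < #R) :
    ∃ l ∈ R, (l : ℕ) < i := by
  by_contra! hR
  have hsub : R.map Fin.valEmbedding ⊆ Ico i n := fun x hx => by
    obtain ⟨l, hl, rfl⟩ := mem_map.1 hx
    exact mem_Ico.2 ⟨hR l hl, l.isLt⟩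
  have := card_le_card hsub
  rw [card_map, Nat.card_Ico] at this
  omega

theorem IsValidAllocation.sum_le {lam : Fin k → ℝ} {w : Fin k → Finset (Fin n) → ℝ}
    (hw : IsValidAllocation G lam w) (hkn : k ≤ n) (hin : i ≤ n) (hn : n + 1 ≤ k + i)
    (hrec : ∀ j R, IsRecoverySet G j R → ((j : ℕ) < i ∧ R = {Fin.castLE hkn j}) ∨ k ≤ #R) :
    ∑ j, lam j ≤ i := by
  have := hw.sum_mul_le (α := fun l => if (l : ℕ) < i then 1 else 0)
    (fun l => by split_ifs <;> norm_num) (c := fun _ => 1) fun j R hR => by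
      rcases hrec j R hR with ⟨hj, rfl⟩ | hR
      · rw [sum_singleton, Fin.val_castLE, if_pos hj]
      · obtain ⟨l, hl, hli⟩ := exists_mem_lt_of_sub_lt_card (i := i) (R := R) (by omega)
        refine le_trans ?_ (single_le_sum (fun l _ => ?_) hl)
        · simp [hli]
        · split_ifs <;> norm_num
  simpa [Fin.card_filter_val_lt, hin] using this

theorem IsValidAllocation.weighted_sum_le {lam : Fin k → ℝ} {w : Fin k → Finset (Fin n) → ℝ}
    (hw : IsValidAllocation G lam w) (hkn : k ≤ n) (hn : n + 1 ≤ k + i)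
    (hrec : ∀ j R, IsRecoverySet G j R → ((j : ℕ) < i ∧ R = {Fin.castLE hkn j}) ∨ k ≤ #R)
    (A : Finset (Fin k)) (hA : ∀ j ∈ A, (j : ℕ) < i) :
    (k : ℝ) * ((∑ j ∈ A, lam j) + ∑ j ∈ univ.filter (fun j : Fin k => i ≤ (j : ℕ)), lam j) +
        ∑ j ∈ univ.filter (fun j : Fin k => (j : ℕ) < i ∧ j ∉ A), lam j ≤
      ((k : ℝ) + i - 1) + #A * ((k : ℝ) - 1) := by
  set A' := A.map (Fin.castLEEmb hkn)
  set α : Fin n → ℝ := fun l => 1 + if l ∈ A' then (k : ℝ) - 1 else 0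
  set c : Fin k → ℝ := fun j => (if j ∈ A then (k : ℝ) else 0) +
    (if i ≤ (j : ℕ) then (k : ℝ) else 0) + if (j : ℕ) < i ∧ j ∉ A then 1 else 0
  have hc_le : ∀ j, c j ≤ k := fun j => by
    have hk : (1 : ℝ) ≤ k := by exact_mod_cast j.pos
    rcases lt_or_ge (j : ℕ) i with hj | hj
    · by_cases hjA : j ∈ A <;> simp [c, hjA, hj, not_le.2 hj, hk]
    · have hjA : j ∉ A := fun h => not_lt.2 hj (hA j h)
      simp [c, hj, hjA, not_lt.2 hj]
  have hc : ∀ j R, IsRecoverySet G j R → c j ≤ ∑ l ∈ R, α l := fun j R hR => by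
    rcases hrec j R hR with ⟨hj, rfl⟩ | hR
    · have hA' : Fin.castLE hkn j ∈ A' ↔ j ∈ A := mem_map' (Fin.castLEEmb hkn)
      by_cases hjA : j ∈ A <;> simp [c, α, hA', hjA, hj, not_le.2 hj]
    · have hk : (1 : ℝ) ≤ k := by exact_mod_cast j.pos
      calc c j ≤ k := hc_le j
        _ ≤ ∑ l ∈ R, (1 : ℝ) := by simpa using (Nat.cast_le (α := ℝ)).2 hR
        _ ≤ ∑ l ∈ R, α l := sum_le_sum fun l _ => by simp only [α]; split_ifs <;> linarith
  have hL : ∑ j, c j * lam j =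
      (k : ℝ) * ((∑ j ∈ A, lam j) + ∑ j ∈ univ.filter (fun j : Fin k => i ≤ (j : ℕ)), lam j) +
        ∑ j ∈ univ.filter (fun j : Fin k => (j : ℕ) < i ∧ j ∉ A), lam j := by
    simp only [c, add_mul, ite_mul, zero_mul, one_mul, sum_add_distrib, ← sum_filter, ← mul_sum,
      filter_mem_eq_inter, univ_inter]
    ring
  have hR : ∑ l, α l = n + #A * ((k : ℝ) - 1) := by
    rw [sum_add_distrib, sum_ite_mem, univ_inter, sum_const, sum_const, card_map, card_univ,
      Fintype.card_fin]
    simp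
  have hn' : (n : ℝ) + 1 ≤ k + i := by exact_mod_cast hn
  have := hw.sum_mul_le (fun l => by simp only [α]; split_ifs <;> simp) hc
  linarith

end Necessity

section Sufficiency

variable {k n i : ℕ}

theorem sum_ite_castLE_eq (hkn : k ≤ n) (f : Fin k → ℝ) (l : Fin n) :
    ∑ j, (if Fin.castLE hkn j = l then f j else 0) = if h : (l : ℕ) < k then f ⟨l, h⟩ else 0 := by
  split_ifs with h
  · have hl : ∀ j, Fin.castLE hkn j = l ↔ j = ⟨l, h⟩ := fun j => by simp [Fin.ext_iff]
    simp only [hl, sum_ite_eq', mem_univ, if_true]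
  · refine sum_eq_zero fun j _ => if_neg ?_
    rintro rfl
    exact h j.isLt

/-- The part of the demand for object `j` served by its own systematic server. -/
def directRate (i : ℕ) (lam : Fin k → ℝ) (j : Fin k) : ℝ :=
  if (j : ℕ) < i then min (lam j) 1 else 0

theorem directRate_nonneg {lam : Fin k → ℝ} (hlam : 0 ≤ lam) (j : Fin k) :
    0 ≤ directRate i lam j := by
  unfold directRate
  split_ifs
  exacts [le_min (hlam j) zero_le_one, le_rfl]

theorem directRate_le_one (lam : Fin k → ℝ) (j : Fin k) : directRate i lam j ≤ 1 := by
  unfold directRate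
  split_ifs
  exacts [min_le_right _ _, zero_le_one]

theorem directRate_le {lam : Fin k → ℝ} (hlam : 0 ≤ lam) (j : Fin k) :
    directRate i lam j ≤ lam j := by
  unfold directRate
  split_ifs
  exacts [min_le_left _ _, hlam j]

theorem directRate_eq_of_directRate_lt_one {lam : Fin k → ℝ} {j : Fin k} (hj : (j : ℕ) < i)
    (h : directRate i lam j < 1) : directRate i lam j = lam j := by
  simp only [directRate, if_pos hj] at h ⊢
  exact min_eq_left ((min_lt_iff.1 h).resolve_right (lt_irrefl 1)).le

theorem mul_sum_sub_directRate_add_sum_le {lam : Fin k → ℝ}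
    (h2 : ∀ A : Finset (Fin k), (∀ j ∈ A, (j : ℕ) < i) →
      (k : ℝ) * ((∑ j ∈ A, lam j) +
          ∑ j ∈ univ.filter (fun j : Fin k => i ≤ (j : ℕ)), lam j) +
        ∑ j ∈ univ.filter (fun j : Fin k => (j : ℕ) < i ∧ j ∉ A), lam j
        ≤ ((k : ℝ) + (i : ℝ) - 1) + (#A : ℝ) * ((k : ℝ) - 1)) :
    k * ∑ j, (lam j - directRate i lam j) + ∑ j, directRate i lam j ≤ (k : ℝ) + i - 1 := by
  set A := univ.filter (fun j : Fin k => (j : ℕ) < i ∧ 1 < lam j)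
  have hpt : ∀ j, k * (lam j - directRate i lam j) + directRate i lam j =
      (if j ∈ A then k * lam j - (k - 1) else 0) + (if i ≤ (j : ℕ) then k * lam j else 0) +
        (if (j : ℕ) < i ∧ j ∉ A then lam j else 0) := by
    intro j
    unfold directRate
    rcases lt_or_ge (j : ℕ) i with hj | hj
    · rcases lt_or_ge 1 (lam j) with hl | hl
      · simp [A, hj, hl, not_le.2 hj, min_eq_right hl.le]
        ring
      · simp [A, hj, hl.not_gt, not_le.2 hj, min_eq_left hl]
    · simp [A, hj, not_lt.2 hj]
  have := h2 A fun j hj => (mem_filter.1 hj).2.1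
  rw [mul_sum, ← sum_add_distrib, sum_congr rfl fun j _ => hpt j]
  simp only [sum_add_distrib, ← sum_filter, filter_mem_eq_inter, univ_inter, sum_sub_distrib,
    sum_const, nsmul_eq_mul, ← mul_sum]
  linarith

def directLoad (hkn : k ≤ n) (i : ℕ) (lam : Fin k → ℝ) (l : Fin n) : ℝ :=
  ∑ j, if Fin.castLE hkn j = l then directRate i lam j else 0

theorem directLoad_castLE (hkn : k ≤ n) (lam : Fin k → ℝ) (j : Fin k) :
    directLoad hkn i lam (Fin.castLE hkn j) = directRate i lam j := by
  simp [directLoad]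

theorem directLoad_mem_Icc (hkn : k ≤ n) {lam : Fin k → ℝ} (hlam : 0 ≤ lam) (l : Fin n) :
    directLoad hkn i lam l ∈ Set.Icc 0 1 := by
  rw [directLoad, sum_ite_castLE_eq]
  split_ifs
  exacts [⟨directRate_nonneg hlam _, directRate_le_one lam _⟩, ⟨le_rfl, zero_le_one⟩]

theorem directLoad_eq_zero (hkn : k ≤ n) (lam : Fin k → ℝ) {l : Fin n} (hl : i ≤ (l : ℕ)) :
    directLoad hkn i lam l = 0 := by
  rw [directLoad, sum_ite_castLE_eq]
  split_ifs
  · simp [directRate, hl]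
  · rfl

theorem sum_directLoad (hkn : k ≤ n) (lam : Fin k → ℝ) :
    ∑ l, directLoad hkn i lam l = ∑ j, directRate i lam j := by
  simp only [directLoad]
  rw [sum_comm]
  simp

theorem exists_distrib_residual (hkn : k ≤ n) (hin : i ≤ n) (hn : k + i ≤ n + 1)
    {lam : Fin k → ℝ} (hlam : 0 ≤ lam) (h1 : ∑ j, lam j ≤ i)
    (h2 : ∀ A : Finset (Fin k), (∀ j ∈ A, (j : ℕ) < i) →
      (k : ℝ) * ((∑ j ∈ A, lam j) +
          ∑ j ∈ univ.filter (fun j : Fin k => i ≤ (j : ℕ)), lam j) +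
        ∑ j ∈ univ.filter (fun j : Fin k => (j : ℕ) < i ∧ j ∉ A), lam j
        ≤ ((k : ℝ) + (i : ℝ) - 1) + (#A : ℝ) * ((k : ℝ) - 1)) :
    ∃ W : Finset (Fin n) → ℝ, (∀ S, 0 ≤ W S) ∧ (∀ S, W S ≠ 0 → #S = k) ∧ ∑ S, W S = 1 ∧
      ∀ l, (∑ j, (lam j - directRate i lam j)) * ∑ S with l ∈ S, W S ≤
        1 - directLoad hkn i lam l := by
  set s₀ : Finset (Fin n) := univ.filter (fun l => (l : ℕ) < i)
  have hs₀ : #s₀ = i := by simp [s₀, Fin.card_filter_val_lt, hin]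
  have hoff : ∀ l ∉ s₀, directLoad hkn i lam l = 0 := fun l hl =>
    directLoad_eq_zero hkn lam (by simpa [s₀] using hl)
  refine exists_distrib_card_eq_mul_marginal_le s₀
    (fun l => sub_nonneg.2 (directLoad_mem_Icc hkn hlam l).2)
    (fun l => sub_le_self _ (directLoad_mem_Icc hkn hlam l).1) (fun l hl => by simp [hoff l hl])
    (by rw [card_compl, hs₀, Fintype.card_fin]; omega) (by simpa using hkn)
    (sum_nonneg fun j _ => sub_nonneg.2 (directRate_le hlam j)) ?_ ?_
  · have hload : ∑ l ∈ s₀, directLoad hkn i lam l = ∑ j, directRate i lam j := by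
      rw [sum_subset (subset_univ s₀) fun l _ => hoff l, sum_directLoad]
    simp only [sum_sub_distrib, hload, sum_const, hs₀, nsmul_eq_mul, mul_one]
    linarith
  · have hn' : (k : ℝ) + i ≤ n + 1 := by exact_mod_cast hn
    simp only [sum_sub_distrib, sum_directLoad, sum_const, card_univ, Fintype.card_fin,
      nsmul_eq_mul, mul_one]
    have hcap := mul_sum_sub_directRate_add_sum_le h2
    rw [sum_sub_distrib] at hcap
    linarith

theorem residual_mul_eq_zero_of_castLE_mem (hkn : k ≤ n) {lam : Fin k → ℝ} (hlam : 0 ≤ lam)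
    {W : Finset (Fin n) → ℝ} (hW0 : ∀ S, 0 ≤ W S)
    (hW : ∀ l, (∑ j, (lam j - directRate i lam j)) * ∑ S with l ∈ S, W S ≤
      1 - directLoad hkn i lam l)
    {j : Fin k} (hj : (j : ℕ) < i) {R : Finset (Fin n)} (hjR : Fin.castLE hkn j ∈ R) :
    (lam j - directRate i lam j) * W R = 0 := by
  by_contra hne
  obtain ⟨hdj, hWR⟩ := mul_ne_zero_iff.1 hne
  have hd : ∀ j, 0 ≤ lam j - directRate i lam j := fun j => sub_nonneg.2 (directRate_le hlam j)
  have hD : 0 < ∑ j, (lam j - directRate i lam j) :=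
    (lt_of_le_of_ne (hd j) (Ne.symm hdj)).trans_le (single_le_sum (fun j _ => hd j) (mem_univ j))
  have hmarg : 0 < ∑ S with Fin.castLE hkn j ∈ S, W S :=
    (lt_of_le_of_ne (hW0 R) (Ne.symm hWR)).trans_le
      (single_le_sum (fun S _ => hW0 S) (mem_filter.2 ⟨mem_univ R, hjR⟩))
  -- residual traffic through the systematic server of `j` leaves it spare capacity, so `j` is
  -- served there entirely
  have hνj : directRate i lam j < 1 := by
    have := hW (Fin.castLE hkn j)
    rw [directLoad_castLE] at this
    nlinarith [mul_pos hD hmarg]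
  exact hdj (sub_eq_zero.2 (directRate_eq_of_directRate_lt_one hj hνj).symm)

theorem exists_isValidAllocation {F : Type*} [Field F] {G : Matrix (Fin k) (Fin n) F}
    (hkn : k ≤ n) (hin : i ≤ n) (hn : k + i ≤ n + 1)
    (hrec : ∀ (j : Fin k) (R : Finset (Fin n)), ((j : ℕ) < i ∧ R = {Fin.castLE hkn j}) ∨
      (#R = k ∧ ((j : ℕ) < i → Fin.castLE hkn j ∉ R)) → IsRecoverySet G j R)
    {lam : Fin k → ℝ} (hlam : 0 ≤ lam) (h1 : ∑ j, lam j ≤ i)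
    (h2 : ∀ A : Finset (Fin k), (∀ j ∈ A, (j : ℕ) < i) →
      (k : ℝ) * ((∑ j ∈ A, lam j) +
          ∑ j ∈ univ.filter (fun j : Fin k => i ≤ (j : ℕ)), lam j) +
        ∑ j ∈ univ.filter (fun j : Fin k => (j : ℕ) < i ∧ j ∉ A), lam j
        ≤ ((k : ℝ) + (i : ℝ) - 1) + (#A : ℝ) * ((k : ℝ) - 1)) :
    ∃ w, IsValidAllocation G lam w := by
  obtain ⟨W, hW0, hWk, hW1, hWload⟩ := exists_distrib_residual hkn hin hn hlam h1 h2
  set ν := directRate i lam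
  set d : Fin k → ℝ := fun j => lam j - ν j
  have hd : ∀ j, 0 ≤ d j := fun j => sub_nonneg.2 (directRate_le hlam j)
  refine ⟨fun j R => (if R = {Fin.castLE hkn j} then ν j else 0) + d j * W R,
    fun j R => add_nonneg ?_ (mul_nonneg (hd j) (hW0 R)), fun j R hR => ?_, fun j => ?_,
    fun l => ?_⟩
  · split_ifs
    exacts [directRate_nonneg hlam j, le_rfl]
  · have h₁ : (if R = {Fin.castLE hkn j} then ν j else 0) = 0 := by
      split_ifs with hRj
      · by_contra hνj
        have hj : (j : ℕ) < i := by
          by_contra hj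
          exact hνj (if_neg hj)
        exact hR (hrec j R (Or.inl ⟨hj, hRj⟩))
      · rfl
    have h₂ : d j * W R = 0 := by
      by_contra hne
      exact hR (hrec j R (Or.inr ⟨hWk R (right_ne_zero_of_mul hne), fun hj hjR =>
        hne (residual_mul_eq_zero_of_castLE_mem hkn hlam hW0 hWload hj hjR)⟩))
    simp only [h₁, h₂, add_zero]
  · dsimp only
    rw [sum_add_distrib, sum_ite_eq', if_pos (mem_univ _), ← mul_sum, hW1, mul_one]
    simp [d]
  · have h₁ : ∑ j, ∑ R ∈ univ.filter (fun R : Finset (Fin n) => l ∈ R),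
        (if R = {Fin.castLE hkn j} then ν j else 0) = directLoad hkn i lam l :=
      sum_congr rfl fun j _ => by
        rw [Finset.sum_ite_eq' _ _ (fun _ => ν j)]
        simp [eq_comm, ν]
    simp only [sum_add_distrib, h₁, ← mul_sum, ← sum_mul]
    linarith [hWload l]

end Sufficiency

theorem srr_characterization_n_eq_k_add_i_sub_one_general
    {F : Type*} [Field F] {k i : ℕ} (hi : 1 ≤ i) (hik : i ≤ k)
    (M : Matrix (Fin k) (Fin (k + (k + i - 1))) F)
    (hsys : ∀ j : Fin k, ∀ r : Fin k,
      M r (Fin.castAdd (k + i - 1) j) = if r = j then (1 : F) else 0)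
    (hMDS : ∀ S : Finset (Fin (k + (k + i - 1))), S.card = k →
      LinearIndependent F (fun l : S => Mᵀ (l : Fin (k + (k + i - 1)))))
    (lam : Fin k → ℝ) (hlam0 : ∀ j, 0 ≤ lam j) :
    lam ∈ ServiceRegion (Gmat M i : Matrix (Fin k) (Fin (k + i - 1)) F) ↔
      ((∑ j, lam j ≤ (i : ℝ)) ∧
        ∀ A : Finset (Fin k), (∀ j ∈ A, (j : ℕ) < i) →
          (k : ℝ) * ((∑ j ∈ A, lam j) +
        ∑ j ∈ Finset.univ.filter (fun j : Fin k => i ≤ (j : ℕ)), lam j) +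
      ∑ j ∈ Finset.univ.filter (fun j : Fin k => (j : ℕ) < i ∧ j ∉ A), lam j
            ≤ ((k : ℝ) + (i : ℝ) - 1) + (A.card : ℝ) * ((k : ℝ) - 1)) := by
  have hkn : k ≤ k + i - 1 := by omega
  have hrec := isRecoverySet_gmat_iff (i := i) hsys hMDS hkn
  constructor
  · rintro ⟨-, w, hw⟩
    have hrec' := fun j R h => ((hrec j R).1 h).imp_right fun h => h.1.ge
    exact ⟨hw.sum_le hkn (by omega) (by omega) hrec', hw.weighted_sum_le hkn (by omega) hrec'⟩
  · rintro ⟨h1, h2⟩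
    exact ⟨hlam0, exists_isValidAllocation hkn (by omega) (by omega) (fun j R => (hrec j R).2)
      hlam0 h1 h2⟩

theorem srr_characterization_n_eq_k_add_i_sub_one
    {F : Type*} [Field F] [Fintype F] {k i : ℕ} (hk : 2 ≤ k) (hi : 1 ≤ i) (hik : i ≤ k)
    (hq : k + (k + i - 1) + 1 ≤ Fintype.card F)
    (M : Matrix (Fin k) (Fin (k + (k + i - 1))) F)
    (hsys : ∀ j : Fin k, ∀ r : Fin k,
      M r (Fin.castAdd (k + i - 1) j) = if r = j then (1 : F) else 0)
    (hMDS : ∀ S : Finset (Fin (k + (k + i - 1))), S.card = k →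
      LinearIndependent F (fun l : S => Mᵀ (l : Fin (k + (k + i - 1)))))
    (lam : Fin k → ℝ) (hlam0 : ∀ j, 0 ≤ lam j) :
    lam ∈ ServiceRegion (Gmat M i : Matrix (Fin k) (Fin (k + i - 1)) F) ↔
      ((∑ j, lam j ≤ (i : ℝ)) ∧
        ∀ A : Finset (Fin k), (∀ j ∈ A, (j : ℕ) < i) →
          (k : ℝ) * ((∑ j ∈ A, lam j) +
        ∑ j ∈ Finset.univ.filter (fun j : Fin k => i ≤ (j : ℕ)), lam j) +
      ∑ j ∈ Finset.univ.filter (fun j : Fin k => (j : ℕ) < i ∧ j ∉ A), lam j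
            ≤ ((k : ℝ) + (i : ℝ) - 1) + (A.card : ℝ) * ((k : ℝ) - 1)) :=
  srr_characterization_n_eq_k_add_i_sub_one_general hi hik M hsys hMDS lam hlam0
end

section
/- Successive tiling: under the coding scheme G_i(k+i−1, k), let λ = (λ_1,…,λ_k) be nonnegative, let A = {j ∈ [i] : λ_j ≥ 1}, B = [i] \ A, C = {i+1,…,k}, and a = |A|. If k·Σ_{j∈A}(λ_j − 1) + k·Σ_{j∈C} λ_j + Σ_{j∈B} λ_j ≤ k + i − 1 − a, Σ_{j=1}^k λ_j = i, and Σ_{j∈A}(λ_j − 1) + Σ_{j∈C} λ_j ≤ 1, then λ is achievable, i.e., λ ∈ S_i(k+i−1, k). -/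
open Matrix

/-! Each systematic object `j < i` is served on its own column at rate `min λ_j 1`. What is left
over is an excess `δ_j` (`λ_j - 1` on `A`, `λ_j` on `C`, `0` on `B`) of total `D ≤ 1`, and a
residual capacity `1 - λ_b` on the systematic server of each `b ∈ B`; because `∑ λ = i`, these
residuals also add up to `D`. By the MDS property, the systematic column of `b` together with the
`k - 1` parity columns is a recovery set for every object other than `b`, and the excess is routed
through these sets proportionally, at rate `δ_j (1 - λ_b) / D`. Each systematic server of `B` then
carries exactly `1` and each parity server carries `D ≤ 1`. -/

theorem sum_mul_div_of_sum_eq {ι : Type*} {s : Finset ι} {r : ι → ℝ} {D x : ℝ}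
    (hr : ∑ b ∈ s, r b = D) (hx : D = 0 → x = 0) : ∑ b ∈ s, x * r b / D = x := by
  simp_rw [mul_div_right_comm x]
  rw [← Finset.mul_sum, hr, div_mul_cancel_of_imp hx]

section Field

variable {F : Type*} [Field F] {k n : ℕ} {ι : Type*}

theorem span_image_eq_top_of_card_eq {v : ι → Fin k → F} {T : Finset ι}
    (hT : LinearIndepOn F v (T : Set ι)) (hcard : T.card = k) :
    Submodule.span F (v '' T) = ⊤ := by
  rw [Set.image_eq_range]
  exact hT.span_eq_top_of_card_eq_finrank' (by simp [hcard])

theorem linearIndepOn_of_card_le_s16 [Fintype ι] {v : ι → Fin k → F}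
    (hv : ∀ S : Finset ι, S.card = k → LinearIndepOn F v (S : Set ι))
    (hk : k ≤ Fintype.card ι) {T : Finset ι} (hT : T.card ≤ k) :
    LinearIndepOn F v (T : Set ι) := by
  obtain ⟨U, hTU, -, hU⟩ := Finset.exists_subsuperset_card_eq (Finset.subset_univ T) hT
    (by rwa [Finset.card_univ])
  exact (hv U hU).mono (Finset.coe_subset.mpr hTU)

theorem notMem_span_image_of_card_lt [Fintype ι] [DecidableEq ι] {v : ι → Fin k → F}
    (hv : ∀ S : Finset ι, S.card = k → LinearIndepOn F v (S : Set ι))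
    (hk : k ≤ Fintype.card ι) {T : Finset ι} (hT : T.card < k) {a : ι} (ha : a ∉ T) :
    v a ∉ Submodule.span F (v '' T) := by
  have hins : LinearIndepOn F v (insert a T : Finset ι) :=
    linearIndepOn_of_card_le_s16 hv hk ((Finset.card_insert_le a T).trans hT)
  rw [Finset.coe_insert, linearIndepOn_insert (by simpa using ha)] at hins
  exact hins.2

theorem isRecoverySet_singleton {G : Matrix (Fin k) (Fin n) F} {j : Fin k} {t : Fin n}
    (ht : Gᵀ t = Pi.single j 1) : IsRecoverySet G j {t} := by
  refine ⟨Submodule.subset_span ⟨t, by simp, ht⟩, fun S hS => ?_⟩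
  rw [Finset.ssubset_singleton_iff.mp hS, Finset.coe_empty,
    show Gᵀ '' (∅ : Set (Fin n)) = ∅ from Set.image_empty _, Submodule.span_empty,
    Submodule.mem_bot]
  exact Pi.single_ne_zero_iff.mpr one_ne_zero

theorem isRecoverySet_of_linearIndepOn [Fintype ι] [DecidableEq ι] {v : ι → Fin k → F}
    (hv : ∀ S : Finset ι, S.card = k → LinearIndepOn F v (S : Set ι))
    (hk : k ≤ Fintype.card ι) {G : Matrix (Fin k) (Fin n) F} {φ : Fin n → ι}
    (hφ : Function.Injective φ) (hG : ∀ l, Gᵀ l = v (φ l)) {j : Fin k} {a : ι}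
    (ha : v a = Pi.single j 1) {R : Finset (Fin n)} (hR : R.card = k) (haR : a ∉ R.image φ) :
    IsRecoverySet G j R := by
  have himage : ∀ S : Finset (Fin n),
      Gᵀ '' (S : Set (Fin n)) = v '' (S.image φ : Finset ι) := by
    intro S
    rw [Finset.coe_image, Set.image_image]
    exact Set.image_congr fun l _ => hG l
  refine ⟨?_, fun S hS => ?_⟩
  · rw [himage, span_image_eq_top_of_card_eq (hv _ ?_) ?_] <;>
      simp [Finset.card_image_of_injective _ hφ, hR]
  · rw [himage, ← ha]
    refine notMem_span_image_of_card_lt hv hk ?_ fun h =>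
      haR (Finset.image_subset_image hS.subset h)
    exact Finset.card_image_le.trans_lt (hR ▸ Finset.card_lt_card hS)

theorem mem_serviceRegion_of_plans {ι : Type*} [Fintype ι] {G : Matrix (Fin k) (Fin n) F}
    {lam : Fin k → ℝ} (plan : Fin k → ι → Finset (Fin n)) (rate : Fin k → ι → ℝ)
    (hrate : ∀ j t, 0 ≤ rate j t)
    (hrec : ∀ j t, rate j t ≠ 0 → IsRecoverySet G j (plan j t))
    (hdemand : ∀ j, ∑ t, rate j t = lam j)
    (hload : ∀ l, ∑ j, ∑ t with l ∈ plan j t, rate j t ≤ 1) :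
    lam ∈ ServiceRegion G := by
  classical
  refine ⟨fun j => hdemand j ▸ Finset.sum_nonneg fun t _ => hrate j t,
    fun j R => ∑ t, if plan j t = R then rate j t else 0, ?_, ?_, fun j => ?_, fun l => ?_⟩
  · exact fun j R => Finset.sum_nonneg fun t _ => by split_ifs <;> simp [hrate]
  · intro j R hR
    refine Finset.sum_eq_zero fun t _ => ?_
    split_ifs with h
    · by_contra hne
      exact hR (h ▸ hrec j t hne)
    · rfl
  · rw [Finset.sum_comm]
    simp [← hdemand j]
  · refine le_trans (le_of_eq ?_) (hload l)
    refine Finset.sum_congr rfl fun j _ => ?_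
    rw [Finset.sum_comm, Finset.sum_filter]
    simp [Finset.sum_ite_eq, Finset.mem_filter]

def sourceColumn (k i : ℕ) (l : Fin n) : Fin (k + n) :=
  if (l : ℕ) < i then Fin.castLE (Nat.le_add_left n k) l else Fin.natAdd k l

theorem val_sourceColumn (i : ℕ) (l : Fin n) :
    (sourceColumn k i l : ℕ) = if (l : ℕ) < i then (l : ℕ) else k + l := by
  unfold sourceColumn
  split_ifs <;> rfl

theorem sourceColumn_injective {i : ℕ} (hik : i ≤ k) :
    Function.Injective (sourceColumn (n := n) k i) := by
  intro l l' h
  have h := congrArg Fin.val h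
  rw [val_sourceColumn, val_sourceColumn] at h
  ext
  split_ifs at h <;> omega

theorem Gmat_transpose_apply (M : Matrix (Fin k) (Fin (k + n)) F) (i : ℕ) (l : Fin n) :
    (Gmat M i)ᵀ l = Mᵀ (sourceColumn k i l) := by
  ext r
  simp only [Matrix.transpose_apply, Gmat, Matrix.of_apply, sourceColumn]
  split_ifs <;> rfl

end Field

namespace SuccessiveTiling

section Rates

variable {k : ℕ} (i : ℕ) (lam : Fin k → ℝ)

def systematicRate (j : Fin k) : ℝ := if (j : ℕ) < i then min (lam j) 1 else 0

def excess (j : Fin k) : ℝ := lam j - systematicRate i lam j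

def residual (j : Fin k) : ℝ := (if (j : ℕ) < i then 1 else 0) - systematicRate i lam j

variable {i lam}

theorem systematicRate_nonneg (hlam : ∀ j, 0 ≤ lam j) (j : Fin k) :
    0 ≤ systematicRate i lam j := by
  unfold systematicRate
  split_ifs
  exacts [le_min (hlam j) zero_le_one, le_rfl]

theorem excess_nonneg (hlam : ∀ j, 0 ≤ lam j) (j : Fin k) : 0 ≤ excess i lam j := by
  unfold excess systematicRate
  split_ifs
  · linarith [min_le_left (lam j) 1]
  · linarith [hlam j]

theorem residual_nonneg (j : Fin k) : 0 ≤ residual i lam j := by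
  unfold residual systematicRate
  split_ifs
  · linarith [min_le_right (lam j) 1]
  · simp

theorem systematicRate_add_residual {j : Fin k} (hj : (j : ℕ) < i) :
    systematicRate i lam j + residual i lam j = 1 := by
  simp [residual, hj]

theorem systematicRate_of_le {j : Fin k} (hj : i ≤ (j : ℕ)) : systematicRate i lam j = 0 := by
  simp [systematicRate, hj.not_gt]

theorem residual_of_le {j : Fin k} (hj : i ≤ (j : ℕ)) : residual i lam j = 0 := by
  simp [residual, systematicRate_of_le hj, hj.not_gt]

theorem excess_mul_residual (j : Fin k) : excess i lam j * residual i lam j = 0 := by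
  unfold excess residual systematicRate
  split_ifs with hj
  · rcases le_total (lam j) 1 with h | h <;> simp [h]
  · ring

theorem sum_excess :
    ∑ j, excess i lam j =
      ∑ j ∈ Finset.univ.filter (fun j : Fin k => (j : ℕ) < i ∧ 1 ≤ lam j), (lam j - 1) +
        ∑ j ∈ Finset.univ.filter (fun j : Fin k => i ≤ (j : ℕ)), lam j := by
  rw [Finset.sum_filter, Finset.sum_filter, ← Finset.sum_add_distrib]
  refine Finset.sum_congr rfl fun j _ => ?_
  unfold excess systematicRate
  by_cases hj : (j : ℕ) < i
  · rcases lt_or_ge (lam j) 1 with h | h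
    · simp [hj, h.le, h.not_ge]
    · simp [hj, h]
  · simp [hj, not_lt.mp hj]

theorem sum_residual (hik : i ≤ k) (hsum : ∑ j, lam j = i) :
    ∑ j, residual i lam j = ∑ j, excess i lam j := by
  simp only [residual, excess, Finset.sum_sub_distrib, Finset.sum_boole, hsum,
    Fin.card_filter_val_lt, min_eq_right hik]

variable (i lam) in
/-- When `∑ j, excess i lam j = 0` all excesses vanish, so the junk value `x / 0 = 0` still
gives the intended (zero) rates. -/
noncomputable def rate (j : Fin k) : Option (Fin k) → ℝ
  | none => systematicRate i lam j
  | some b => excess i lam j * residual i lam b / ∑ j', excess i lam j'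

theorem rate_nonneg (hlam : ∀ j, 0 ≤ lam j) (j : Fin k) (t : Option (Fin k)) :
    0 ≤ rate i lam j t := by
  cases t with
  | none => exact systematicRate_nonneg hlam j
  | some b =>
    exact div_nonneg (mul_nonneg (excess_nonneg hlam j) (residual_nonneg b))
      (Finset.sum_nonneg fun j _ => excess_nonneg hlam j)

theorem sum_rate (hlam : ∀ j, 0 ≤ lam j) (hik : i ≤ k) (hsum : ∑ j, lam j = i) (j : Fin k) :
    ∑ t, rate i lam j t = lam j := by
  have hexcess : ∑ j, excess i lam j = 0 → excess i lam j = 0 := fun h =>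
    (Finset.sum_eq_zero_iff_of_nonneg fun j _ => excess_nonneg hlam j).mp h j
      (Finset.mem_univ j)
  rw [Fintype.sum_option]
  simp only [rate]
  rw [sum_mul_div_of_sum_eq (sum_residual hik hsum) hexcess, excess]
  ring

end Rates

section Plans

variable {F : Type*} [Field F] {k n : ℕ}

def plan (i : ℕ) (j : Fin k) : Option (Fin k) → Finset (Fin n)
  | none => Finset.univ.filter fun l => (l : ℕ) = j
  | some b => Finset.univ.filter fun l => (l : ℕ) = b ∨ i ≤ (l : ℕ)

variable {i : ℕ}

theorem card_plan_some (j : Fin k) {b : Fin k} (hb : (b : ℕ) < i) (hin : i ≤ n) :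
    (plan (n := n) i j (some b)).card = n - i + 1 := by
  have hval : (plan (n := n) i j (some b)).map Fin.valEmbedding =
      insert (b : ℕ) (Finset.Ico i n) := by
    ext x
    simp only [plan, Finset.mem_map, Finset.mem_filter, Finset.mem_univ, true_and,
      Fin.valEmbedding_apply, Finset.mem_insert, Finset.mem_Ico]
    constructor
    · rintro ⟨l, hl, rfl⟩
      omega
    · intro hx
      exact ⟨⟨x, by omega⟩, by simpa using hx.imp id And.left, rfl⟩
  rw [← Finset.card_map Fin.valEmbedding, hval, Finset.card_insert_of_notMem (by simp [hb]),
    Nat.card_Ico]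

variable {M : Matrix (Fin k) (Fin (k + n)) F} {lam : Fin k → ℝ}

theorem isRecoverySet_plan_none (hsys : ∀ j, Mᵀ (Fin.castAdd n j) = Pi.single j 1)
    (hin : i ≤ n) {j : Fin k} (hj : (j : ℕ) < i) :
    IsRecoverySet (Gmat M i) j (plan i j none) := by
  have hplan : plan (n := n) i j none = {⟨j, by omega⟩} := by
    ext l
    simp [plan, Fin.ext_iff]
  rw [hplan]
  refine isRecoverySet_singleton ?_
  rw [Gmat_transpose_apply, ← hsys]
  congr 1
  ext
  simp [val_sourceColumn, hj]

theorem isRecoverySet_plan_some (hsys : ∀ j, Mᵀ (Fin.castAdd n j) = Pi.single j 1)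
    (hMDS : ∀ S : Finset (Fin (k + n)), S.card = k →
      LinearIndepOn F Mᵀ (S : Set (Fin (k + n))))
    (hik : i ≤ k) (hn : n = k + i - 1) {j b : Fin k} (hb : (b : ℕ) < i) (hbj : b ≠ j) :
    IsRecoverySet (Gmat M i) j (plan i j (some b)) := by
  refine isRecoverySet_of_linearIndepOn hMDS (by simp) (sourceColumn_injective hik)
    (Gmat_transpose_apply M i) (hsys j) ?_ ?_
  · rw [card_plan_some j hb (by omega)]
    omega
  · simp only [Finset.mem_image, plan, Finset.mem_filter, Finset.mem_univ, true_and, not_exists,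
      not_and]
    intro l hl h
    have h := congrArg Fin.val h
    rw [val_sourceColumn] at h
    simp only [Fin.val_castAdd] at h
    have := j.isLt
    split_ifs at h <;> [exact hbj (Fin.ext (by omega)); omega]

theorem sum_filter_mem_plan_rate (hik : i ≤ k) (hsum : ∑ j, lam j = i) (l : Fin n) :
    ∑ j, ∑ t with l ∈ plan i j t, rate i lam j t =
      ∑ j ∈ Finset.univ.filter (fun j : Fin k => (l : ℕ) = j), systematicRate i lam j +
        ∑ b ∈ Finset.univ.filter (fun b : Fin k => (l : ℕ) = b ∨ i ≤ (l : ℕ)),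
          residual i lam b := by
  have hresidual : ∀ b, ∑ j, excess i lam j = 0 → residual i lam b = 0 := fun b h =>
    (Finset.sum_eq_zero_iff_of_nonneg fun b _ => residual_nonneg b).mp
      (sum_residual hik hsum ▸ h) b (Finset.mem_univ b)
  have hcolumn : ∀ b, ∑ j, excess i lam j * residual i lam b / ∑ j', excess i lam j' =
      residual i lam b := fun b => by
    simp_rw [mul_comm (excess i lam _)]
    exact sum_mul_div_of_sum_eq rfl (hresidual b)
  simp only [Finset.sum_filter, Fintype.sum_option, Finset.sum_add_distrib]
  congr 1
  · simp [plan, rate]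
  · rw [Finset.sum_comm]
    simp only [plan, rate, Finset.mem_filter, Finset.mem_univ, true_and]
    refine Finset.sum_congr rfl fun b _ => ?_
    split_ifs
    exacts [hcolumn b, Finset.sum_const_zero]

theorem sum_filter_mem_plan_rate_le_one (hik : i ≤ k) (hsum : ∑ j, lam j = i)
    (hexcess : ∑ j, excess i lam j ≤ 1) (l : Fin n) :
    ∑ j, ∑ t with l ∈ plan i j t, rate i lam j t ≤ 1 := by
  rw [sum_filter_mem_plan_rate hik hsum l]
  by_cases hl : (l : ℕ) < i
  · have hm : ∀ j : Fin k, (l : ℕ) = j ↔ ⟨l, by omega⟩ = j := fun j => by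
      simp [Fin.ext_iff]
    simp only [hm, hl.not_ge, or_false, Finset.filter_eq, Finset.mem_univ, if_true,
      Finset.sum_singleton]
    exact (systematicRate_add_residual (lam := lam) (j := ⟨l, by omega⟩) hl).le
  · have hfilter : ∀ j : Fin k, (l : ℕ) = j → systematicRate i lam j = 0 :=
      fun j hj => systematicRate_of_le (by omega)
    rw [Finset.sum_eq_zero fun j hj => hfilter j (Finset.mem_filter.mp hj).2, zero_add,
      Finset.filter_true_of_mem fun b _ => Or.inr (not_lt.mp hl), sum_residual hik hsum]
    exact hexcess

theorem isRecoverySet_plan (hsys : ∀ j, Mᵀ (Fin.castAdd n j) = Pi.single j 1)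
    (hMDS : ∀ S : Finset (Fin (k + n)), S.card = k →
      LinearIndepOn F Mᵀ (S : Set (Fin (k + n))))
    (hik : i ≤ k) (hn : n = k + i - 1) {j : Fin k} {t : Option (Fin k)}
    (ht : rate i lam j t ≠ 0) : IsRecoverySet (Gmat M i) j (plan i j t) := by
  cases t with
  | none =>
    have hj : (j : ℕ) < i := by
      by_contra hj
      exact ht (systematicRate_of_le (not_lt.mp hj))
    exact isRecoverySet_plan_none hsys (by omega) hj
  | some b =>
    obtain ⟨⟨hj, hb⟩, -⟩ := div_ne_zero_iff.mp ht |>.imp_left mul_ne_zero_iff.mp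
    have hbi : (b : ℕ) < i := by
      by_contra hbi
      exact hb (residual_of_le (not_lt.mp hbi))
    refine isRecoverySet_plan_some hsys hMDS hik hn hbi ?_
    rintro rfl
    exact hj (by simpa [hb] using excess_mul_residual (i := i) (lam := lam) b)

end Plans

end SuccessiveTiling

theorem successive_tiling_general
    {F : Type*} [Field F] {k i : ℕ} (hik : i ≤ k)
    (M : Matrix (Fin k) (Fin (k + (k + i - 1))) F)
    (hsys : ∀ j : Fin k, ∀ r : Fin k,
      M r (Fin.castAdd (k + i - 1) j) = if r = j then (1 : F) else 0)
    (hMDS : ∀ S : Finset (Fin (k + (k + i - 1))), S.card = k →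
      LinearIndependent F (fun l : S => Mᵀ (l : Fin (k + (k + i - 1)))))
    (lam : Fin k → ℝ) (hlam0 : ∀ j, 0 ≤ lam j)
    (hsum : ∑ j, lam j = (i : ℝ))
    (hslack :
      (∑ j ∈ Finset.univ.filter (fun j : Fin k => (j : ℕ) < i ∧ 1 ≤ lam j), (lam j - 1)) +
          ∑ j ∈ Finset.univ.filter (fun j : Fin k => i ≤ (j : ℕ)), lam j ≤ 1) :
    lam ∈ ServiceRegion (Gmat M i : Matrix (Fin k) (Fin (k + i - 1)) F) := by
  have hcol : ∀ j, Mᵀ (Fin.castAdd (k + i - 1) j) = Pi.single j 1 := fun j =>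
    funext fun r => by simp [hsys, Pi.single_apply]
  open SuccessiveTiling in
  exact mem_serviceRegion_of_plans (plan i) (rate i lam) (rate_nonneg hlam0)
    (fun _ _ => isRecoverySet_plan hcol hMDS hik rfl) (sum_rate hlam0 hik hsum)
    (sum_filter_mem_plan_rate_le_one hik hsum (sum_excess ▸ hslack))

theorem successive_tiling
    {F : Type*} [Field F] [Fintype F] {k i : ℕ} (hk : 2 ≤ k) (hi : 1 ≤ i) (hik : i ≤ k)
    (hq : k + (k + i - 1) + 1 ≤ Fintype.card F)
    (M : Matrix (Fin k) (Fin (k + (k + i - 1))) F)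
    (hsys : ∀ j : Fin k, ∀ r : Fin k,
      M r (Fin.castAdd (k + i - 1) j) = if r = j then (1 : F) else 0)
    (hMDS : ∀ S : Finset (Fin (k + (k + i - 1))), S.card = k →
      LinearIndependent F (fun l : S => Mᵀ (l : Fin (k + (k + i - 1)))))
    (lam : Fin k → ℝ) (hlam0 : ∀ j, 0 ≤ lam j)
    (hcap :
      (k : ℝ) * (∑ j ∈ Finset.univ.filter (fun j : Fin k => (j : ℕ) < i ∧ 1 ≤ lam j),
            (lam j - 1)) +
          (k : ℝ) * (∑ j ∈ Finset.univ.filter (fun j : Fin k => i ≤ (j : ℕ)), lam j) +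
          ∑ j ∈ Finset.univ.filter (fun j : Fin k => (j : ℕ) < i ∧ lam j < 1), lam j ≤
        (k : ℝ) + (i : ℝ) - 1 -
          ((Finset.univ.filter (fun j : Fin k => (j : ℕ) < i ∧ 1 ≤ lam j)).card : ℝ))
    (hsum : ∑ j, lam j = (i : ℝ))
    (hslack :
      (∑ j ∈ Finset.univ.filter (fun j : Fin k => (j : ℕ) < i ∧ 1 ≤ lam j), (lam j - 1)) +
          ∑ j ∈ Finset.univ.filter (fun j : Fin k => i ≤ (j : ℕ)), lam j ≤ 1) :
    lam ∈ ServiceRegion (Gmat M i : Matrix (Fin k) (Fin (k + i - 1)) F) :=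
  successive_tiling_general hik M hsys hMDS lam hlam0 hsum hslack
end
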